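/- arXiv:1506.06692 — 2 statements merged into one kernel-verified Lean document; each statement's English description precedes it below -/
import Mathlib

section
/- Let K = [[A,B],[C,D]] be a real symmetric (p+q)×(p+q) block matrix with C = Bᵀ, let E ∈ ℝ and ε, γ > 0 with γ ≤ ε/4, and assume D − E·I is invertible with ‖(D−E·I)⁻¹‖ ≤ 1/ε, ‖B‖ ≤ γ, ‖C‖ ≤ γ. Let λ₁ ≤ … ≤ λ_m be the eigenvalues of K that lie in [E−ε/2, E+ε/2], counted with multiplicity, and let μ₁ ≤ … ≤ μ_p be all eigenvalues of the symmetric matrix F_E := A − B(D−E·I)⁻¹C, counted with multiplicity. Then there exists a strictly increasing map σ : {1,…,m} → {1,…,p} such that |λ_i − μ_{σ(i)}| ≤ 2(γ/ε)²·|λ_i − E| for every i = 1,…,m. -/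
open Matrix

/-- The operator norm of a real matrix acting between Euclidean spaces. -/
noncomputable def opNorm {m n : Type*} [Fintype m] [Fintype n] [DecidableEq n]
    (M : Matrix m n ℝ) : ℝ :=
  ‖LinearMap.toContinuousLinearMap (Matrix.toEuclideanLin M)‖

/-!
For `t` within `ε/2` of `E` the matrix `D - t` stays invertible with `‖(D - t)⁻¹‖ ≤ 2/ε`, and an
eigenvector `(x, y)` of `K` for the eigenvalue `t` has `y = -(D - t)⁻¹ C x` and `F_t x = t x`; so
the multiplicity of `t` in `K` is at most its multiplicity in `F_t`. The resolvent identity makes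
`t ↦ F_t` Lipschitz with constant `4(γ/ε)² ≤ 1/4` on the window, and by Weyl's inequality
`|λ_k(F_s) - λ_k(F_t)| ≤ ‖F_s - F_t‖` the positions `k` in the sorted spectrum of `F_t` where
`λ_k(F_t) = t` move strictly monotonically with `t`. Sending each eigenvalue `λ` of `K` to such a
position of `F_λ` is therefore injective and order preserving, and Weyl's inequality once more gives
`|λ - λ_k(F_E)| ≤ ‖F_λ - F_E‖ ≤ 2(γ/ε)²|λ - E|`.
-/

open Finset
open scoped RealInnerProductSpace Matrix.Norms.L2Operator

lemma opNorm_eq_l2_opNorm {m n : Type*} [Fintype m] [Fintype n] [DecidableEq n]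
    (M : Matrix m n ℝ) : opNorm M = ‖M‖ :=
  rfl

theorem exists_injective_forall_mem_of_card_filter_le {ι α κ : Type*} [Fintype ι]
    [DecidableEq α] (f : ι → α) (T : α → Finset κ) (hcard : ∀ i, #{j | f j = f i} ≤ #(T (f i)))
    (hdisj : ∀ i j, f i ≠ f j → Disjoint (T (f i)) (T (f j))) :
    ∃ σ : ι → κ, Function.Injective σ ∧ ∀ i, σ i ∈ T (f i) := by
  have hemb (a : α) : Nonempty ({j // f j = a} ↪ T a) := by
    refine Function.Embedding.nonempty_of_card_le ?_
    rw [Fintype.card_subtype, Fintype.card_coe]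
    by_cases ha : ∃ i, f i = a
    · obtain ⟨i, rfl⟩ := ha
      exact hcard i
    · push Not at ha
      simp [ha]
  let e a := (hemb a).some
  have he (j : ι) (a : α) (h : f j = a) : (e a ⟨j, h⟩ : κ) = e (f j) ⟨j, rfl⟩ := by subst h; rfl
  refine ⟨fun i => e (f i) ⟨i, rfl⟩,
    fun i j (hij : (e (f i) ⟨i, rfl⟩ : κ) = e (f j) ⟨j, rfl⟩) => ?_, fun i => (e (f i) _).2⟩
  have hf : f i = f j := by
    by_contra hne
    exact Finset.disjoint_left.mp (hdisj i j hne) (e (f i) _).2 (hij ▸ (e (f j) _).2)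
  rw [← he j (f i) hf.symm] at hij
  exact congrArg Subtype.val ((e (f i)).injective (Subtype.ext hij))

namespace OrthonormalBasis

variable {ι 𝕜 E : Type*} [Fintype ι] [RCLike 𝕜] [NormedAddCommGroup E] [InnerProductSpace 𝕜 E]

lemma inner_eq_zero_of_mem_span_image (b : OrthonormalBasis ι 𝕜 E) {S : Set ι} {v : E}
    (hv : v ∈ Submodule.span 𝕜 (b '' S)) {j : ι} (hj : j ∉ S) : inner 𝕜 (b j) v = 0 := by
  suffices Submodule.span 𝕜 (b '' S) ≤ (𝕜 ∙ b j)ᗮ from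
    Submodule.mem_orthogonal_singleton_iff_inner_right.mp (this hv)
  rw [Submodule.span_le]
  rintro _ ⟨i, hi, rfl⟩
  exact Submodule.mem_orthogonal_singleton_iff_inner_right.mpr
    (b.orthonormal.inner_eq_zero (ne_of_mem_of_not_mem hi hj).symm)

lemma finrank_span_image (b : OrthonormalBasis ι 𝕜 E) (S : Finset ι) :
    Module.finrank 𝕜 (Submodule.span 𝕜 (b '' S)) = #S := by
  have hli : LinearIndependent 𝕜 (fun i : S => b i) :=
    b.orthonormal.linearIndependent.comp _ Subtype.val_injective
  have hrange : Set.range (fun i : S => b i) = b '' S := by ext; simp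
  rw [← hrange, finrank_span_eq_card hli, Fintype.card_coe]

end OrthonormalBasis

namespace LinearMap.IsSymmetric

variable {E : Type*} [NormedAddCommGroup E] [InnerProductSpace ℝ E] [FiniteDimensional ℝ E]
  {n : ℕ} (hn : Module.finrank ℝ E = n) {T : E →ₗ[ℝ] E}

lemma inner_apply_self_eq_sum (hT : T.IsSymmetric) (v : E) :
    ⟪T v, v⟫ = ∑ i, hT.eigenvalues hn i * ⟪hT.eigenvectorBasis hn i, v⟫ ^ 2 := by
  rw [← (hT.eigenvectorBasis hn).sum_inner_mul_inner]
  refine Finset.sum_congr rfl fun i _ => ?_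
  rw [hT, apply_eigenvectorBasis, real_inner_smul_right, real_inner_comm v]
  simp only [RCLike.ofReal_real_eq_id, id_eq]
  ring

lemma mul_norm_sq_le_inner_apply_self (hT : T.IsSymmetric) {S : Set (Fin n)} {a : ℝ}
    (ha : ∀ i ∈ S, a ≤ hT.eigenvalues hn i) {v : E}
    (hv : v ∈ Submodule.span ℝ (hT.eigenvectorBasis hn '' S)) :
    a * ‖v‖ ^ 2 ≤ ⟪T v, v⟫ := by
  rw [hT.inner_apply_self_eq_sum hn, ← (hT.eigenvectorBasis hn).sum_sq_inner_right, mul_sum]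
  refine Finset.sum_le_sum fun i _ => ?_
  by_cases hi : i ∈ S
  · exact mul_le_mul_of_nonneg_right (ha i hi) (sq_nonneg _)
  · simp [(hT.eigenvectorBasis hn).inner_eq_zero_of_mem_span_image hv hi]

lemma inner_apply_self_le_mul_norm_sq (hT : T.IsSymmetric) {S : Set (Fin n)} {a : ℝ}
    (ha : ∀ i ∈ S, hT.eigenvalues hn i ≤ a) {v : E}
    (hv : v ∈ Submodule.span ℝ (hT.eigenvectorBasis hn '' S)) :
    ⟪T v, v⟫ ≤ a * ‖v‖ ^ 2 := by
  rw [hT.inner_apply_self_eq_sum hn, ← (hT.eigenvectorBasis hn).sum_sq_inner_right, mul_sum]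
  refine Finset.sum_le_sum fun i _ => ?_
  by_cases hi : i ∈ S
  · exact mul_le_mul_of_nonneg_right (ha i hi) (sq_nonneg _)
  · simp [(hT.eigenvectorBasis hn).inner_eq_zero_of_mem_span_image hv hi]

/-- Weyl's inequality. By dimension count, the span of the top `k + 1` eigenvectors of `S` meets
the span of the bottom `n - k` eigenvectors of `T`; compare the Rayleigh quotients there. -/
theorem eigenvalues_le_add_of_inner_le {S : E →ₗ[ℝ] E} (hS : S.IsSymmetric) (hT : T.IsSymmetric)
    {c : ℝ} (h : ∀ x, ⟪S x, x⟫ ≤ ⟪T x, x⟫ + c * ‖x‖ ^ 2) (k : Fin n) :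
    hS.eigenvalues hn k ≤ hT.eigenvalues hn k + c := by
  set V := Submodule.span ℝ (hS.eigenvectorBasis hn '' ↑(Iic k))
  set W := Submodule.span ℝ (hT.eigenvectorBasis hn '' ↑(Ici k))
  obtain ⟨v, hvV, hvW, hv⟩ : ∃ v ∈ V, v ∈ W ∧ v ≠ 0 := by
    by_contra! hVW
    have := Submodule.finrank_add_finrank_le_of_disjoint (Submodule.disjoint_def.mpr hVW)
    rw [OrthonormalBasis.finrank_span_image, OrthonormalBasis.finrank_span_image, Fin.card_Iic,
      Fin.card_Ici, hn] at this
    omega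
  have hlow := hS.mul_norm_sq_le_inner_apply_self hn
    (fun i hi => hS.eigenvalues_antitone hn (mem_Iic.mp hi)) hvV
  have hup := hT.inner_apply_self_le_mul_norm_sq hn
    (fun i hi => hT.eigenvalues_antitone hn (mem_Ici.mp hi)) hvW
  have hpos : 0 < ‖v‖ ^ 2 := by positivity
  nlinarith [h v]

end LinearMap.IsSymmetric

namespace Matrix

section RCLike

variable {𝕜 n : Type*} [RCLike 𝕜] [Fintype n] [DecidableEq n]

lemma l2_opNorm_one_le : ‖(1 : Matrix n n 𝕜)‖ ≤ 1 := by
  rw [cstar_norm_def, map_one]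
  exact ContinuousLinearMap.norm_id_le

lemma isUnit_one_sub_and_norm_inv_le {Y : Matrix n n 𝕜} (hY : ‖Y‖ ≤ 1 / 2) :
    IsUnit (1 - Y) ∧ ‖(1 - Y)⁻¹‖ ≤ 2 := by
  have hu : IsUnit (1 - Y) := (Units.oneSub Y (by linarith)).isUnit
  refine ⟨hu, ?_⟩
  have hinv : (1 - Y)⁻¹ = 1 + (1 - Y)⁻¹ * Y := by
    have h := nonsing_inv_mul (1 - Y) ((isUnit_iff_isUnit_det _).mp hu)
    rw [mul_sub, mul_one] at h
    exact sub_eq_iff_eq_add.mp h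
  have : ‖(1 - Y)⁻¹‖ ≤ 1 + ‖(1 - Y)⁻¹‖ * (1 / 2) :=
    calc ‖(1 - Y)⁻¹‖ = ‖1 + (1 - Y)⁻¹ * Y‖ := by rw [← hinv]
      _ ≤ 1 + ‖(1 - Y)⁻¹‖ * ‖Y‖ :=
        (norm_add_le _ _).trans (add_le_add l2_opNorm_one_le (l2_opNorm_mul _ _))
      _ ≤ 1 + ‖(1 - Y)⁻¹‖ * (1 / 2) := by gcongr
  linarith

lemma isUnit_sub_smul_one_and_norm_inv_le {D : Matrix n n 𝕜} {s t : 𝕜}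
    (hs : IsUnit (D - s • 1)) (hst : ‖t - s‖ * ‖(D - s • 1)⁻¹‖ ≤ 1 / 2) :
    IsUnit (D - t • 1) ∧ ‖(D - t • 1)⁻¹‖ ≤ 2 * ‖(D - s • 1)⁻¹‖ := by
  set R := D - s • (1 : Matrix n n 𝕜)
  have hfac : D - t • 1 = R * (1 - (t - s) • R⁻¹) := by
    rw [mul_sub, mul_one, mul_smul_comm, mul_nonsing_inv _ ((isUnit_iff_isUnit_det R).mp hs),
      sub_smul]
    simp only [R]
    abel
  obtain ⟨hu, hnorm⟩ := isUnit_one_sub_and_norm_inv_le (Y := (t - s) • R⁻¹)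
    (by rwa [norm_smul])
  refine ⟨hfac ▸ hs.mul hu, ?_⟩
  rw [hfac, mul_inv_rev]
  calc ‖(1 - (t - s) • R⁻¹)⁻¹ * R⁻¹‖ ≤ ‖(1 - (t - s) • R⁻¹)⁻¹‖ * ‖R⁻¹‖ := l2_opNorm_mul _ _
    _ ≤ 2 * ‖R⁻¹‖ := by gcongr

lemma isUnit_sub_smul_one_and_norm_inv_le_of_norm_sub_le {D : Matrix n n 𝕜} {s t : 𝕜} {ε : ℝ}
    (hε : 0 < ε) (hs : IsUnit (D - s • 1)) (hR : ‖(D - s • 1)⁻¹‖ ≤ 1 / ε)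
    (hst : ‖t - s‖ ≤ ε / 2) : IsUnit (D - t • 1) ∧ ‖(D - t • 1)⁻¹‖ ≤ 2 / ε := by
  have h : ‖t - s‖ * ‖(D - s • 1)⁻¹‖ ≤ 1 / 2 :=
    calc _ ≤ ε / 2 * (1 / ε) := by gcongr
      _ = 1 / 2 := by field_simp
  obtain ⟨hu, hle⟩ := isUnit_sub_smul_one_and_norm_inv_le hs h
  exact ⟨hu, hle.trans (by rw [div_eq_mul_one_div 2 ε]; gcongr)⟩

lemma mem_eigenspace_toEuclideanLin_iff {M : Matrix n n 𝕜} {μ : 𝕜} {v : EuclideanSpace 𝕜 n} :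
    v ∈ Module.End.eigenspace (toEuclideanLin M) μ ↔ M *ᵥ v.ofLp = μ • v.ofLp := by
  rw [Module.End.mem_eigenspace_iff, toLpLin_apply, ← (WithLp.ofLp_injective 2).eq_iff]
  rfl

end RCLike

variable {n : Type*} [Fintype n] [DecidableEq n]

lemma inner_toEuclideanLin_self_le (M : Matrix n n ℝ) (x : EuclideanSpace ℝ n) :
    ⟪toEuclideanLin M x, x⟫ ≤ ‖M‖ * ‖x‖ ^ 2 :=
  calc ⟪toEuclideanLin M x, x⟫ ≤ ‖toEuclideanLin M x‖ * ‖x‖ := real_inner_le_norm _ _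
    _ ≤ ‖M‖ * ‖x‖ * ‖x‖ := by
        gcongr
        exact (toEuclideanCLM (𝕜 := ℝ) M).le_opNorm x
    _ = ‖M‖ * ‖x‖ ^ 2 := by ring

namespace IsHermitian

lemma eigenvalues₀_le_add_norm_sub {M N : Matrix n n ℝ} (hM : M.IsHermitian)
    (hN : N.IsHermitian) (k : Fin (Fintype.card n)) :
    hM.eigenvalues₀ k ≤ hN.eigenvalues₀ k + ‖M - N‖ :=
  LinearMap.IsSymmetric.eigenvalues_le_add_of_inner_le _ _ _ (fun x => by
    have := inner_toEuclideanLin_self_le (M - N) x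
    rw [map_sub, LinearMap.sub_apply, inner_sub_left] at this
    linarith) k

lemma abs_eigenvalues₀_sub_le {M N : Matrix n n ℝ} (hM : M.IsHermitian) (hN : N.IsHermitian)
    (k : Fin (Fintype.card n)) : |hM.eigenvalues₀ k - hN.eigenvalues₀ k| ≤ ‖M - N‖ := by
  have := hN.eigenvalues₀_le_add_norm_sub hM k
  rw [norm_sub_rev] at this
  rw [abs_sub_le_iff]
  constructor <;> linarith [hM.eigenvalues₀_le_add_norm_sub hN k]

lemma lt_of_eigenvalues₀_eq_of_norm_sub_lt {M N : Matrix n n ℝ} (hM : M.IsHermitian)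
    (hN : N.IsHermitian) {s t : ℝ} (hst : ‖N - M‖ < t - s) {k k' : Fin (Fintype.card n)}
    (hk : hM.eigenvalues₀ k = s) (hk' : hN.eigenvalues₀ k' = t) : k' < k := by
  by_contra! hle
  have := hN.eigenvalues₀_antitone hle
  have := hN.eigenvalues₀_le_add_norm_sub hM k
  linarith

lemma card_filter_eigenvalues_eq_card_filter_eigenvalues₀ {M : Matrix n n ℝ}
    (hM : M.IsHermitian) (t : ℝ) : #{i | hM.eigenvalues i = t} = #{k | hM.eigenvalues₀ k = t} := by
  refine card_equiv (Fintype.equivOfCardEq (Fintype.card_fin _)).symm fun i => ?_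
  simp only [mem_filter, mem_univ, true_and]
  rfl

lemma card_filter_eigenvalues_eq {M : Matrix n n ℝ} (hM : M.IsHermitian) (t : ℝ) :
    #{i | hM.eigenvalues i = t} =
      Module.finrank ℝ (Module.End.eigenspace (toEuclideanLin M) t) := by
  rw [card_filter_eigenvalues_eq_card_filter_eigenvalues₀]
  exact LinearMap.IsSymmetric.card_filter_eigenvalues_eq _ _ t

/- `eigenvalues` is indexed by `n` in no particular order, so the matching is built on the
decreasingly sorted `eigenvalues₀` and transported along the equivalence defining `eigenvalues`. -/
theorem exists_matching_of_norm_sub_lt {ι : Type*} [Fintype ι] (F : ℝ → Matrix n n ℝ)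
    (hF : ∀ t, (F t).IsHermitian) (f : ι → ℝ)
    (hF_lt : ∀ i j, f i < f j → ‖F (f j) - F (f i)‖ < f j - f i)
    (hmult : ∀ i, #{j | f j = f i} ≤ #{k | (hF (f i)).eigenvalues k = f i}) (t₀ : ℝ) :
    ∃ σ : ι → n, Function.Injective σ ∧
      (∀ i j, f i < f j → (hF t₀).eigenvalues (σ i) ≤ (hF t₀).eigenvalues (σ j)) ∧
      ∀ i, |f i - (hF t₀).eigenvalues (σ i)| ≤ ‖F (f i) - F t₀‖ := by
  let e : Fin (Fintype.card n) ≃ n := Fintype.equivOfCardEq (Fintype.card_fin _)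
  have he (t : ℝ) (k) : (hF t).eigenvalues (e k) = (hF t).eigenvalues₀ k := by
    simp [eigenvalues, e]
  let T (t : ℝ) : Finset (Fin (Fintype.card n)) := {k | (hF t).eigenvalues₀ k = t}
  have hT {t k} (hk : k ∈ T t) : (hF t).eigenvalues₀ k = t := (mem_filter.mp hk).2
  have horder {i j} (h : f i < f j) {k k'} (hk : k ∈ T (f i)) (hk' : k' ∈ T (f j)) : k' < k :=
    (hF _).lt_of_eigenvalues₀_eq_of_norm_sub_lt (hF _) (hF_lt i j h) (hT hk) (hT hk')
  obtain ⟨σ, hσ, hσT⟩ := exists_injective_forall_mem_of_card_filter_le f T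
    (fun i => (hmult i).trans_eq (card_filter_eigenvalues_eq_card_filter_eigenvalues₀ _ _))
    (fun i j hij => disjoint_left.mpr fun k hki hkj => (hij.lt_or_gt.elim
      (fun h => (horder h hki hkj).false) (fun h => (horder h hkj hki).false)))
  refine ⟨e ∘ σ, e.injective.comp hσ, fun i j h => ?_, fun i => ?_⟩
  · simp only [Function.comp_apply, he]
    exact (hF t₀).eigenvalues₀_antitone (horder h (hσT i) (hσT j)).le
  · simpa [he, hT (hσT i)] using (hF (f i)).abs_eigenvalues₀_sub_le (hF t₀) (σ i)

end IsHermitian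

end Matrix

section SchurComplement

variable {m n α : Type*} [Fintype n] [DecidableEq n] [CommRing α]

/-- `F_μ` in the notation of the paper. -/
noncomputable def schurComplement (A : Matrix m m α) (B : Matrix m n α) (C : Matrix n m α)
    (D : Matrix n n α) (μ : α) : Matrix m m α :=
  A - B * (D - μ • 1)⁻¹ * C

lemma isHermitian_schurComplement [StarRing α] {A : Matrix m m α} {B : Matrix m n α}
    {C : Matrix n m α} {D : Matrix n n α} (hA : A.IsHermitian) (hBC : Bᴴ = C)
    (hD : D.IsHermitian) {μ : α} (hμ : IsSelfAdjoint μ) :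
    (schurComplement A B C D μ).IsHermitian := by
  subst hBC
  exact hA.sub (isHermitian_mul_mul_conjTranspose B (hD.sub (isHermitian_one.smul hμ)).inv)

lemma mulVec_eq_smul_of_fromBlocks_mulVec_eq_smul [Fintype m] {A : Matrix m m α}
    {B : Matrix m n α} {C : Matrix n m α} {D : Matrix n n α} {μ : α} (hD : IsUnit (D - μ • 1))
    {x : m → α} {y : n → α} (h : fromBlocks A B C D *ᵥ Sum.elim x y = μ • Sum.elim x y) :
    y = -((D - μ • 1)⁻¹ *ᵥ (C *ᵥ x)) ∧ schurComplement A B C D μ *ᵥ x = μ • x := by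
  rw [fromBlocks_mulVec, Sum.elim_comp_inl, Sum.elim_comp_inr] at h
  have h₁ : A *ᵥ x + B *ᵥ y = μ • x := funext fun i => by simpa using congrFun h (Sum.inl i)
  have h₂ : C *ᵥ x + D *ᵥ y = μ • y := funext fun i => by simpa using congrFun h (Sum.inr i)
  have hy : y = -((D - μ • 1)⁻¹ *ᵥ (C *ᵥ x)) := by
    have : (D - μ • 1) *ᵥ y = -(C *ᵥ x) := by
      rw [sub_mulVec, smul_mulVec, one_mulVec, ← h₂]; abel
    rw [← mulVec_neg, ← this, mulVec_mulVec, nonsing_inv_mul _ ((isUnit_iff_isUnit_det _).mp hD),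
      one_mulVec]
  refine ⟨hy, ?_⟩
  rw [schurComplement, sub_mulVec, ← mulVec_mulVec, ← mulVec_mulVec, ← h₁, hy, mulVec_neg]
  abel

variable {𝕜 : Type*} [RCLike 𝕜] [Fintype m] [DecidableEq m]

lemma finrank_eigenspace_fromBlocks_le (A : Matrix m m 𝕜) (B : Matrix m n 𝕜) (C : Matrix n m 𝕜)
    (D : Matrix n n 𝕜) {μ : 𝕜} (hD : IsUnit (D - μ • 1)) :
    Module.finrank 𝕜 (Module.End.eigenspace (toEuclideanLin (fromBlocks A B C D)) μ) ≤
      Module.finrank 𝕜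
        (Module.End.eigenspace (toEuclideanLin (schurComplement A B C D μ)) μ) := by
  set L : Matrix (m ⊕ n) m 𝕜 := fromRows 1 (-((D - μ • 1)⁻¹ * C))
  refine (Submodule.finrank_mono fun v hv => ?_).trans
    (Submodule.finrank_map_le (toEuclideanLin L) _)
  rw [mem_eigenspace_toEuclideanLin_iff, ← Sum.elim_comp_inl_inr v.ofLp] at hv
  obtain ⟨hy, hx⟩ := mulVec_eq_smul_of_fromBlocks_mulVec_eq_smul hD hv
  refine ⟨WithLp.toLp 2 (v.ofLp ∘ Sum.inl), mem_eigenspace_toEuclideanLin_iff.mpr hx, ?_⟩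
  rw [toLpLin_apply, ← (WithLp.ofLp_injective 2).eq_iff]
  conv_rhs => rw [← Sum.elim_comp_inl_inr v.ofLp, hy]
  simp [L, fromRows_mulVec, neg_mulVec]

lemma card_filter_eigenvalues_fromBlocks_le {A : Matrix m m ℝ}
    {B : Matrix m n ℝ} {C : Matrix n m ℝ} {D : Matrix n n ℝ} (hK : (fromBlocks A B C D).IsHermitian)
    {μ : ℝ} (hF : (schurComplement A B C D μ).IsHermitian) (hD : IsUnit (D - μ • 1)) :
    #{i | hK.eigenvalues i = μ} ≤ #{k | hF.eigenvalues k = μ} := by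
  rw [hK.card_filter_eigenvalues_eq, hF.card_filter_eigenvalues_eq]
  exact finrank_eigenspace_fromBlocks_le A B C D hD

lemma norm_schurComplement_sub_le (A : Matrix m m 𝕜) (B : Matrix m n 𝕜) (C : Matrix n m 𝕜)
    (D : Matrix n n 𝕜) {s t : 𝕜} (hs : IsUnit (D - s • 1)) (ht : IsUnit (D - t • 1)) :
    ‖schurComplement A B C D s - schurComplement A B C D t‖ ≤
      ‖s - t‖ * ‖B‖ * ‖(D - s • 1)⁻¹‖ * ‖(D - t • 1)⁻¹‖ * ‖C‖ := by
  have hdiff : schurComplement A B C D s - schurComplement A B C D t =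
      (t - s) • (B * (D - t • 1)⁻¹ * (D - s • 1)⁻¹ * C) := by
    rw [schurComplement, schurComplement, sub_sub_sub_cancel_left, ← Matrix.sub_mul,
      ← Matrix.mul_sub, inv_sub_inv (iff_of_true ht hs), sub_sub_sub_cancel_left, ← sub_smul,
      Matrix.mul_smul, Matrix.smul_mul, Matrix.mul_one, Matrix.mul_smul, Matrix.smul_mul]
    simp only [Matrix.mul_assoc]
  calc ‖schurComplement A B C D s - schurComplement A B C D t‖
      ≤ ‖t - s‖ * (‖B‖ * ‖(D - t • 1)⁻¹‖ * ‖(D - s • 1)⁻¹‖ * ‖C‖) := by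
        rw [hdiff, norm_smul]
        gcongr
        refine (l2_opNorm_mul _ _).trans ?_
        gcongr
        refine (l2_opNorm_mul _ _).trans ?_
        gcongr
        exact l2_opNorm_mul _ _
    _ = ‖s - t‖ * ‖B‖ * ‖(D - s • 1)⁻¹‖ * ‖(D - t • 1)⁻¹‖ * ‖C‖ := by
        rw [norm_sub_rev]; ring

lemma norm_schurComplement_sub_le_of_le {A : Matrix m m 𝕜} {B : Matrix m n 𝕜}
    {C : Matrix n m 𝕜} {D : Matrix n n 𝕜} {s t : 𝕜} {γ a b : ℝ} (hB : ‖B‖ ≤ γ) (hC : ‖C‖ ≤ γ)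
    (hs : IsUnit (D - s • 1)) (ht : IsUnit (D - t • 1)) (ha : ‖(D - s • 1)⁻¹‖ ≤ a)
    (hb : ‖(D - t • 1)⁻¹‖ ≤ b) :
    ‖schurComplement A B C D s - schurComplement A B C D t‖ ≤ γ ^ 2 * a * b * ‖s - t‖ := by
  have hγ : 0 ≤ γ := (norm_nonneg B).trans hB
  have ha₀ : 0 ≤ a := (norm_nonneg _).trans ha
  have hb₀ : 0 ≤ b := (norm_nonneg _).trans hb
  calc _ ≤ ‖s - t‖ * ‖B‖ * ‖(D - s • 1)⁻¹‖ * ‖(D - t • 1)⁻¹‖ * ‖C‖ :=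
        norm_schurComplement_sub_le A B C D hs ht
    _ ≤ ‖s - t‖ * γ * a * b * γ := by gcongr
    _ = γ ^ 2 * a * b * ‖s - t‖ := by ring

end SchurComplement

theorem schur_spectrum_close_general {p q : ℕ}
    (A : Matrix (Fin p) (Fin p) ℝ) (B : Matrix (Fin p) (Fin q) ℝ)
    (C : Matrix (Fin q) (Fin p) ℝ) (D : Matrix (Fin q) (Fin q) ℝ)
    (E ε γ : ℝ) (hε : 0 < ε) (hγε : γ ≤ ε / 4)
    (hK : (Matrix.fromBlocks A B C D).IsHermitian)
    (hDE : IsUnit (D - E • (1 : Matrix (Fin q) (Fin q) ℝ)))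
    (hDEinv : opNorm (D - E • 1)⁻¹ ≤ 1 / ε)
    (hB : opNorm B ≤ γ) (hCn : opNorm C ≤ γ)
    (hFE : (A - B * (D - E • 1)⁻¹ * C).IsHermitian) :
    ∃ σ : {i : Fin p ⊕ Fin q // hK.eigenvalues i ∈ Set.Icc (E - ε / 2) (E + ε / 2)} → Fin p,
      Function.Injective σ ∧
      (∀ i j, hK.eigenvalues i.1 < hK.eigenvalues j.1 →
        hFE.eigenvalues (σ i) ≤ hFE.eigenvalues (σ j)) ∧
      ∀ i, |hK.eigenvalues i.1 - hFE.eigenvalues (σ i)| ≤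
        2 * (γ / ε) ^ 2 * |hK.eigenvalues i.1 - E| := by
  rw [opNorm_eq_l2_opNorm] at hDEinv hB hCn
  obtain ⟨hA, hBC, -, hD⟩ := isHermitian_fromBlocks_iff.mp hK
  have hF (t : ℝ) := isHermitian_schurComplement hA hBC hD (IsSelfAdjoint.all t)
  set W := Set.Icc (E - ε / 2) (E + ε / 2)
  let ev (i : {i // hK.eigenvalues i ∈ W}) : ℝ := hK.eigenvalues i.1
  have hres i : IsUnit (D - ev i • 1) ∧ ‖(D - ev i • 1)⁻¹‖ ≤ 2 / ε :=
    isUnit_sub_smul_one_and_norm_inv_le_of_norm_sub_le hε hDE hDEinv <| by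
      rw [Real.norm_eq_abs, abs_sub_le_iff]
      exact ⟨by linarith [i.2.2], by linarith [i.2.1]⟩
  have hlip i j (hij : ev i < ev j) :
      ‖schurComplement A B C D (ev j) - schurComplement A B C D (ev i)‖ < ev j - ev i := by
    have hγ : 0 ≤ γ / ε := div_nonneg ((norm_nonneg B).trans hB) hε.le
    have hγ' : γ / ε ≤ 1 / 4 := by rw [div_le_iff₀ hε]; linarith
    refine (norm_schurComplement_sub_le_of_le hB hCn (hres j).1 (hres i).1 (hres j).2
      (hres i).2).trans_lt ?_
    rw [Real.norm_eq_abs, abs_of_pos (sub_pos.mpr hij)]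
    refine mul_lt_of_lt_one_left (sub_pos.mpr hij) ?_
    rw [show γ ^ 2 * (2 / ε) * (2 / ε) = 4 * (γ / ε) ^ 2 by ring]
    nlinarith
  have hmult i : #{j | ev j = ev i} ≤ #{k | (hF (ev i)).eigenvalues k = ev i} :=
    calc _ ≤ #{j | hK.eigenvalues j = ev i} :=
          card_le_card_of_injOn Subtype.val (fun j hj => by simpa using hj)
            Subtype.val_injective.injOn
      _ ≤ _ := card_filter_eigenvalues_fromBlocks_le hK (hF _) (hres i).1
  obtain ⟨σ, hσ, hmono, hclose⟩ :=
    Matrix.IsHermitian.exists_matching_of_norm_sub_lt _ hF ev hlip hmult E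
  refine ⟨σ, hσ, hmono, fun i => (hclose i).trans ?_⟩
  refine (norm_schurComplement_sub_le_of_le hB hCn (hres i).1 hDE (hres i).2 hDEinv).trans_eq ?_
  rw [Real.norm_eq_abs]
  ring

/-- for the symmetric block matrix `K = [[A,B],[Bᵀ,D]]` with
`‖(D-E·I)⁻¹‖ ≤ 1/ε`, `‖B‖ ≤ γ`, `‖C‖ ≤ γ`, `γ ≤ ε/4`, every eigenvalue of `K` in
`[E-ε/2, E+ε/2]` can be matched, injectively and monotonically (counting multiplicity),
with an eigenvalue of the Schur complement `F_E = A - B(D-E·I)⁻¹Bᵀ` at distance at most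
`2(γ/ε)²·|λ_i - E|`. -/
theorem schur_spectrum_close {p q : ℕ}
    (A : Matrix (Fin p) (Fin p) ℝ) (B : Matrix (Fin p) (Fin q) ℝ)
    (C : Matrix (Fin q) (Fin p) ℝ) (D : Matrix (Fin q) (Fin q) ℝ)
    (hC : C = Bᵀ)
    (E ε γ : ℝ) (hε : 0 < ε) (hγ : 0 < γ) (hγε : γ ≤ ε / 4)
    (hK : (Matrix.fromBlocks A B C D).IsHermitian)
    (hDE : IsUnit (D - E • (1 : Matrix (Fin q) (Fin q) ℝ)))
    (hDEinv : opNorm (D - E • 1)⁻¹ ≤ 1 / ε)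
    (hB : opNorm B ≤ γ) (hCn : opNorm C ≤ γ)
    (hFE : (A - B * (D - E • 1)⁻¹ * C).IsHermitian) :
    ∃ σ : {i : Fin p ⊕ Fin q // hK.eigenvalues i ∈ Set.Icc (E - ε / 2) (E + ε / 2)} → Fin p,
      Function.Injective σ ∧
      (∀ i j, hK.eigenvalues i.1 < hK.eigenvalues j.1 →
        hFE.eigenvalues (σ i) ≤ hFE.eigenvalues (σ j)) ∧
      ∀ i, |hK.eigenvalues i.1 - hFE.eigenvalues (σ i)| ≤
        2 * (γ / ε) ^ 2 * |hK.eigenvalues i.1 - E| :=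
  schur_spectrum_close_general A B C D E ε γ hε hγε hK hDE hDEinv hB hCn hFE
end

section
/- There exists a constant c_d > 0 depending only on the dimension d with the following property. Let E ∈ ℝ, ε > 0, γ > 0 with 2·c_d·γ ≤ ε, let u ∈ [−1,1]^Λ, and let Λ' ⊆ Λ be a set of positions such that every x ∈ Λ' satisfies both |√(u_x²+1) − E| ≥ ε and |√(u_x²+1) + E| ≥ ε. Let D be the restriction of H(u) to the sites Λ' × {1,2}. Then for every λ ∈ ℝ with |λ − E| ≤ ε/2, the matrix D − λ·I is invertible and for all positions x, y ∈ Λ' the 2×2 block of (D − λ·I)⁻¹ between x and y has operator norm at most (c_d·γ/ε)^{|x−y|}·(4/ε). -/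
open Matrix

/-- The ℓ¹ distance `|x-y| = Σᵢ |xᵢ-yᵢ|` on `ℤ^d`, as a natural number. -/
def dist1 {d : ℕ} (x y : Fin d → ℤ) : ℕ := ∑ i, (x i - y i).natAbs

/-- The random block Hamiltonian: diagonal 2×2 block `[[u_x,1],[1,-u_x]]` at each
position `x ∈ Λ`, and block `γ·I₂` between nearest-neighbor positions. -/
noncomputable def Ham (d : ℕ) (γ : ℝ) (Λ : Finset (Fin d → ℤ)) (u : {x // x ∈ Λ} → ℝ) :
    Matrix ({x // x ∈ Λ} × Fin 2) ({x // x ∈ Λ} × Fin 2) ℝ := fun s t =>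
  if s.1 = t.1 then
    (if s.2 = t.2 then (if s.2 = 0 then u s.1 else -u s.1) else 1)
  else if dist1 (s.1 : Fin d → ℤ) (t.1 : Fin d → ℤ) = 1 then
    (if s.2 = t.2 then γ else 0)
  else 0

/-- The 2×2 block of a site-indexed matrix between positions `x` and `y`. -/
def blk {α β : Type*} (M : Matrix (α × Fin 2) (β × Fin 2) ℝ) (x : α) (y : β) :
    Matrix (Fin 2) (Fin 2) ℝ := fun i j => M (x, i) (y, j)

/-!
Write `D - λ = A + G` with `A` block diagonal, `A_x = h_x - λ`, and `G` the hopping. Since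
`det (h_x - λ) = (λ - √(u_x²+1))(λ + √(u_x²+1))`, nonresonance gives
`|det (h_x - λ)| ≥ (ε/2)(√(u_x²+1) + |λ|)`, so every entry of `A_x⁻¹` is at most `2/ε`.
Hence `T = A⁻¹ G` has absolute row sums at most `ρ = 8dγ/ε ≤ 1/6`, which makes `1 + T`
diagonally dominant; so `D - λ` is invertible and `K = (D - λ)⁻¹` solves `K = A⁻¹ - T K`,
whence `|K_st| ≤ (2/ε)/(1 - ρ)`. As `A⁻¹` is block diagonal and `T` only links nearest
neighbours, iterating the identity gains a factor `ρ` per unit of distance. On diagonal blocks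
there is no such gain, and one needs the Frobenius bound `3/ε` for `A_x⁻¹` instead.
-/

open Finset

open scoped Matrix.Norms.L2Operator

section RowSum

variable {σ : Type*} [Fintype σ]

lemma exists_ne_zero_of_mul_apply_ne_zero {l n R : Type*} [NonUnitalNonAssocSemiring R]
    {A : Matrix l σ R} {B : Matrix σ n R} {s : l} {t : n} (h : (A * B) s t ≠ 0) :
    ∃ r, A s r ≠ 0 ∧ B r t ≠ 0 := by
  obtain ⟨r, -, hr⟩ := exists_ne_zero_of_sum_ne_zero h
  exact ⟨r, left_ne_zero_of_mul hr, right_ne_zero_of_mul hr⟩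

lemma abs_mul_apply_le {T Q : Matrix σ σ ℝ} {ρ C : ℝ} (hT : ∀ s, ∑ r, |T s r| ≤ ρ)
    (hC : 0 ≤ C) (s t : σ) (hQ : ∀ r, T s r ≠ 0 → |Q r t| ≤ C) :
    |(T * Q) s t| ≤ ρ * C := by
  calc |(T * Q) s t| ≤ ∑ r, |T s r| * |Q r t| := by
        simpa only [Matrix.mul_apply, abs_mul] using
          abs_sum_le_sum_abs (fun r => T s r * Q r t) univ
    _ ≤ ∑ r, |T s r| * C := sum_le_sum fun r _ => by
        by_cases h : T s r = 0
        · simp [h]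
        · exact mul_le_mul_of_nonneg_left (hQ r h) (abs_nonneg _)
    _ ≤ ρ * C := by
        rw [← sum_mul]
        exact mul_le_mul_of_nonneg_right (hT s) hC

lemma sum_abs_mul_apply_le {A B : Matrix σ σ ℝ} {α β : ℝ}
    (hA : ∀ s, ∑ r, |A s r| ≤ α) (hB : ∀ r, ∑ t, |B r t| ≤ β) (hβ : 0 ≤ β)
    (s : σ) :
    ∑ t, |(A * B) s t| ≤ α * β := by
  calc ∑ t, |(A * B) s t| ≤ ∑ t, ∑ r, |A s r| * |B r t| := sum_le_sum fun t _ => by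
        simpa only [Matrix.mul_apply, abs_mul] using
          abs_sum_le_sum_abs (fun r => A s r * B r t) univ
    _ = ∑ r, |A s r| * ∑ t, |B r t| := by
        rw [sum_comm]
        simp_rw [mul_sum]
    _ ≤ ∑ r, |A s r| * β :=
        sum_le_sum fun r _ => mul_le_mul_of_nonneg_left (hB r) (abs_nonneg _)
    _ ≤ α * β := by
        rw [← sum_mul]
        exact mul_le_mul_of_nonneg_right (hA s) hβ

lemma det_one_add_ne_zero [DecidableEq σ] {T : Matrix σ σ ℝ} {ρ : ℝ}
    (hT : ∀ s, ∑ r, |T s r| ≤ ρ) (hρ : ρ < 1) : (1 + T).det ≠ 0 := by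
  refine det_ne_zero_of_sum_row_lt_diag fun k => ?_
  have hoff : ∑ j ∈ univ.erase k, ‖(1 + T) k j‖ = ∑ j, |T k j| - |T k k| := by
    rw [← sum_erase_eq_sub (mem_univ k)]
    exact sum_congr rfl fun j hj => by simp [Matrix.one_apply_ne' (ne_of_mem_erase hj)]
  rw [hoff, Matrix.add_apply, Matrix.one_apply_eq, Real.norm_eq_abs]
  linarith [hT k, neg_abs_le (T k k), le_abs_self (1 + T k k)]

lemma isUnit_of_mul_eq_one_add [DecidableEq σ] {N M T : Matrix σ σ ℝ} {ρ : ℝ}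
    (h : N * M = 1 + T) (hT : ∀ s, ∑ r, |T s r| ≤ ρ) (hρ : ρ < 1) : IsUnit M := by
  rw [Matrix.isUnit_iff_isUnit_det, isUnit_iff_ne_zero]
  intro h0
  apply det_one_add_ne_zero hT hρ
  rw [← h, Matrix.det_mul, h0, mul_zero]

lemma inv_eq_sub_mul_inv_of_mul_eq_one_add [DecidableEq σ] {N M T : Matrix σ σ ℝ}
    (h : N * M = 1 + T) (hM : IsUnit M) : M⁻¹ = N - T * M⁻¹ := by
  refine eq_sub_of_add_eq ?_
  calc M⁻¹ + T * M⁻¹ = (1 + T) * M⁻¹ := by rw [Matrix.add_mul, Matrix.one_mul]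
    _ = N := by
      rw [← h, Matrix.mul_assoc,
        Matrix.mul_nonsing_inv _ ((Matrix.isUnit_iff_isUnit_det M).mp hM), Matrix.mul_one]

variable {K N T : Matrix σ σ ℝ}

lemma abs_apply_le_of_eq_sub_mul {b ρ : ℝ} (hK : K = N - T * K) (hN : ∀ s t, |N s t| ≤ b)
    (hT : ∀ s, ∑ r, |T s r| ≤ ρ) (hρ : ρ < 1) (s t : σ) : |K s t| ≤ b / (1 - ρ) := by
  have : Nonempty (σ × σ) := ⟨(s, t)⟩
  obtain ⟨⟨s₀, t₀⟩, hmax⟩ := Finite.exists_max fun q : σ × σ => |K q.1 q.2|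
  have hmax₀ : |K s₀ t₀| ≤ b + ρ * |K s₀ t₀| :=
    calc |K s₀ t₀| = |N s₀ t₀ - (T * K) s₀ t₀| :=
          congrArg abs (congr_fun₂ hK s₀ t₀)
      _ ≤ |N s₀ t₀| + |(T * K) s₀ t₀| := abs_sub _ _
      _ ≤ b + ρ * |K s₀ t₀| :=
          add_le_add (hN _ _) (abs_mul_apply_le hT (abs_nonneg _) _ _ fun r _ => hmax (r, t₀))
  rw [le_div_iff₀ (by linarith)]
  nlinarith [hmax (s, t)]

lemma abs_apply_le_pow_of_eq_sub_mul {ρ B : ℝ} (δ : σ → σ → ℕ)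
    (hδ : ∀ s r t, δ s t ≤ δ s r + δ r t) (hK : K = N - T * K)
    (hN : ∀ s t, δ s t ≠ 0 → N s t = 0) (hTδ : ∀ s t, T s t ≠ 0 → δ s t ≤ 1)
    (hT : ∀ s, ∑ r, |T s r| ≤ ρ) (hρ : 0 ≤ ρ) (hB : ∀ s t, |K s t| ≤ B) (s t : σ) :
    |K s t| ≤ ρ ^ δ s t * B := by
  suffices ∀ k : ℕ, ∀ s t, k ≤ δ s t → |K s t| ≤ ρ ^ k * B from this _ s t le_rfl
  intro k
  induction k with
  | zero => simpa using hB
  | succ k ih =>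
    intro s t hk
    have hB0 : 0 ≤ B := (abs_nonneg _).trans (hB s t)
    rw [congr_fun₂ hK s t, Matrix.sub_apply, hN s t (by omega), zero_sub, abs_neg, pow_succ',
      mul_assoc]
    exact abs_mul_apply_le hT (by positivity) s t fun r hr =>
      ih r t (by linarith [hδ s r t, hTδ s r hr])

end RowSum

section OpNorm

variable {m n : Type*} [Fintype m] [Fintype n] [DecidableEq n]

lemma opNorm_eq_norm (M : Matrix m n ℝ) : opNorm M = ‖M‖ := rfl

lemma opNorm_le_of_sum_sq_le (M : Matrix m n ℝ) {C : ℝ} (hC : 0 ≤ C)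
    (h : ∑ i, ∑ j, M i j ^ 2 ≤ C ^ 2) : opNorm M ≤ C := by
  refine ContinuousLinearMap.opNorm_le_bound _ hC fun v => ?_
  refine le_of_pow_le_pow_left₀ two_ne_zero (by positivity) ?_
  rw [mul_pow, LinearMap.coe_toContinuousLinearMap', EuclideanSpace.norm_sq_eq,
    EuclideanSpace.norm_sq_eq]
  calc ∑ i, ‖toEuclideanLin M v i‖ ^ 2 = ∑ i, (∑ j, M i j * v j) ^ 2 := by
        simp [Matrix.mulVec, dotProduct]
    _ ≤ ∑ i, (∑ j, M i j ^ 2) * ∑ j, v j ^ 2 :=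
        sum_le_sum fun i _ => sum_mul_sq_le_sq_mul_sq _ _ _
    _ ≤ C ^ 2 * ∑ j, ‖v j‖ ^ 2 := by
        simp only [← sum_mul, Real.norm_eq_abs, sq_abs]
        exact mul_le_mul_of_nonneg_right h (by positivity)

lemma opNorm_le_of_abs_le (M : Matrix m n ℝ) {b : ℝ} (hb : 0 ≤ b)
    (h : ∀ i j, |M i j| ≤ b) :
    opNorm M ≤ √(Fintype.card m * Fintype.card n) * b := by
  refine opNorm_le_of_sum_sq_le M (by positivity) ?_
  rw [mul_pow, Real.sq_sqrt (by positivity)]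
  calc ∑ i, ∑ j, M i j ^ 2 ≤ ∑ _i : m, ∑ _j : n, b ^ 2 := sum_le_sum fun i _ =>
        sum_le_sum fun j _ => sq_le_sq' (abs_le.mp (h i j)).1 (abs_le.mp (h i j)).2
    _ = _ := by simp [mul_assoc]

end OpNorm

lemma opNorm_blk_le_of_abs_le {α β : Type*} (M : Matrix (α × Fin 2) (β × Fin 2) ℝ) (x : α)
    (y : β) {b : ℝ} (hb : 0 ≤ b) (h : ∀ i j, |M (x, i) (y, j)| ≤ b) :
    opNorm (blk M x y) ≤ 2 * b := by
  have h4 : √((Fintype.card (Fin 2) : ℝ) * Fintype.card (Fin 2)) = 2 := by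
    rw [Fintype.card_fin, Nat.cast_ofNat, ← sq, Real.sqrt_sq zero_le_two]
  simpa [h4] using opNorm_le_of_abs_le (blk M x y) hb h

section BlockDiagonal

variable {ι κ α : Type*} [DecidableEq ι]

def posBlockDiagonal [Zero α] (a : ι → Matrix κ κ α) : Matrix (ι × κ) (ι × κ) α :=
  (Matrix.blockDiagonal a).submatrix (Equiv.prodComm ι κ) (Equiv.prodComm ι κ)

@[simp]
lemma posBlockDiagonal_apply [Zero α] (a : ι → Matrix κ κ α) (x y : ι) (i j : κ) :
    posBlockDiagonal a (x, i) (y, j) = if x = y then a x i j else 0 := by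
  simp [posBlockDiagonal, Matrix.blockDiagonal_apply]

lemma posBlockDiagonal_mul [Fintype ι] [Fintype κ] [NonUnitalNonAssocSemiring α]
    (a b : ι → Matrix κ κ α) :
    posBlockDiagonal a * posBlockDiagonal b = posBlockDiagonal (a * b) := by
  rw [posBlockDiagonal, posBlockDiagonal, Matrix.submatrix_mul_equiv,
    ← Matrix.blockDiagonal_mul]
  rfl

lemma posBlockDiagonal_one [DecidableEq κ] [Zero α] [One α] :
    posBlockDiagonal (1 : ι → Matrix κ κ α) = 1 := by
  rw [posBlockDiagonal, Matrix.blockDiagonal_one, Matrix.submatrix_one_equiv]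

lemma sum_abs_posBlockDiagonal_apply [Fintype ι] [Fintype κ] (a : ι → Matrix κ κ ℝ)
    (s : ι × κ) : ∑ t, |posBlockDiagonal a s t| = ∑ j, |a s.1 s.2 j| := by
  obtain ⟨x, i⟩ := s
  rw [Fintype.sum_prod_type, Fintype.sum_eq_single x fun y hy => by simp [Ne.symm hy]]
  simp

lemma posBlockDiagonal_inv_mul_add [Fintype ι] [Fintype κ] [DecidableEq κ]
    {a : ι → Matrix κ κ ℝ} (ha : ∀ x, IsUnit (a x).det)
    (G : Matrix (ι × κ) (ι × κ) ℝ) :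
    posBlockDiagonal (fun x => (a x)⁻¹) * (posBlockDiagonal a + G) =
      1 + posBlockDiagonal (fun x => (a x)⁻¹) * G := by
  rw [Matrix.mul_add, posBlockDiagonal_mul, ← posBlockDiagonal_one]
  congr
  funext x
  exact Matrix.nonsing_inv_mul _ (ha x)

lemma opNorm_blk_self_le [Fintype ι] {a : ι → Matrix (Fin 2) (Fin 2) ℝ}
    {K T : Matrix (ι × Fin 2) (ι × Fin 2) ℝ} {ρ B : ℝ}
    (hK : K = posBlockDiagonal a - T * K) (hT : ∀ s, ∑ r, |T s r| ≤ ρ)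
    (hB : ∀ s t, |K s t| ≤ B) (x : ι) :
    opNorm (blk K x x) ≤ opNorm (a x) + 2 * (ρ * B) := by
  have hB0 : 0 ≤ B := (abs_nonneg _).trans (hB (x, 0) (x, 0))
  have hρ0 : 0 ≤ ρ := (sum_nonneg fun r _ => abs_nonneg (T (x, 0) r)).trans (hT (x, 0))
  have hblk : blk K x x = a x - blk (T * K) x x := by
    ext i j
    simp [blk, congr_fun₂ hK (x, i) (x, j)]
  rw [hblk, opNorm_eq_norm]
  refine (norm_sub_le _ _).trans (add_le_add le_rfl ?_)
  exact opNorm_blk_le_of_abs_le _ _ _ (by positivity) fun i j =>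
    abs_mul_apply_le hT hB0 _ _ fun r _ => hB r _

end BlockDiagonal

section Dist1

variable {d : ℕ}

lemma dist1_eq_zero_iff {x y : Fin d → ℤ} : dist1 x y = 0 ↔ x = y := by
  simp only [dist1, sum_eq_zero_iff, mem_univ, true_implies, Int.natAbs_eq_zero, sub_eq_zero,
    funext_iff]

lemma dist1_self (x : Fin d → ℤ) : dist1 x x = 0 := dist1_eq_zero_iff.mpr rfl

lemma dist1_triangle (x y z : Fin d → ℤ) : dist1 x z ≤ dist1 x y + dist1 y z := by
  unfold dist1
  rw [← sum_add_distrib]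
  exact sum_le_sum fun i _ => by omega

lemma exists_eq_update_of_dist1_eq_one {x y : Fin d → ℤ} (h : dist1 x y = 1) :
    ∃ i : Fin d, ∃ b : Bool, y = Function.update x i (x i + if b then 1 else -1) := by
  obtain ⟨i, -, hi⟩ : ∃ i ∈ univ, (x i - y i).natAbs ≠ 0 := by
    by_contra! h0
    simp [dist1, sum_eq_zero h0] at h
  have hrest : ∀ j ≠ i, y j = x j := by
    intro j hj
    have := add_le_sum (fun k _ => Nat.zero_le ((x k - y k).natAbs))
      (mem_univ i) (mem_univ j) (Ne.symm hj)
    unfold dist1 at h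
    omega
  refine ⟨i, decide (x i < y i), funext fun j => ?_⟩
  rcases eq_or_ne j i with rfl | hj
  · have : (x j - y j).natAbs ≤ 1 :=
      h ▸ single_le_sum (fun k _ => Nat.zero_le ((x k - y k).natAbs)) (mem_univ j)
    by_cases hlt : x j < y j <;> simp [hlt] <;> omega
  · simp [Function.update_of_ne hj, hrest j hj]

lemma card_filter_dist1_eq_one_le (x : Fin d → ℤ) (S : Finset (Fin d → ℤ)) :
    #(S.filter fun y => dist1 x y = 1) ≤ 2 * d := by
  calc #(S.filter fun y => dist1 x y = 1)
      ≤ #((univ : Finset (Fin d × Bool)).image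
          fun p => Function.update x p.1 (x p.1 + if p.2 then 1 else -1)) := by
        refine card_le_card fun y hy => ?_
        obtain ⟨i, b, rfl⟩ := exists_eq_update_of_dist1_eq_one (mem_filter.mp hy).2
        exact mem_image.mpr ⟨(i, b), mem_univ _, rfl⟩
    _ ≤ #(univ : Finset (Fin d × Bool)) := card_image_le
    _ = 2 * d := by simp [mul_comm]

end Dist1

section LocalBlock

/-- The block `h_x - λ·I₂` of `H(u) - λ` at a position with `u_x = p`. -/
def localBlock (p lam : ℝ) : Matrix (Fin 2) (Fin 2) ℝ := !![p - lam, 1; 1, -p - lam]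

lemma det_localBlock (p lam : ℝ) : (localBlock p lam).det = lam ^ 2 - p ^ 2 - 1 := by
  rw [localBlock, Matrix.det_fin_two_of]
  ring

lemma inv_localBlock (p lam : ℝ) :
    (localBlock p lam)⁻¹ = (lam ^ 2 - p ^ 2 - 1)⁻¹ • !![-p - lam, -1; -1, p - lam] := by
  rw [Matrix.inv_def, det_localBlock, Ring.inverse_eq_inv', localBlock,
    Matrix.adjugate_fin_two_of]

variable {p lam ε : ℝ}

lemma mul_le_abs_det_localBlock {E : ℝ} (hres₁ : ε ≤ |√(p ^ 2 + 1) - E|)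
    (hres₂ : ε ≤ |√(p ^ 2 + 1) + E|) (hlam : |lam - E| ≤ ε / 2) :
    ε / 2 * (√(p ^ 2 + 1) + |lam|) ≤ |(localBlock p lam).det| := by
  set s := √(p ^ 2 + 1)
  have hs : s ^ 2 = p ^ 2 + 1 := Real.sq_sqrt (by positivity)
  have hs0 : 0 ≤ s := Real.sqrt_nonneg _
  have hminus : ε / 2 ≤ |lam - s| := by
    have := abs_sub_le s lam E
    rw [abs_sub_comm s lam] at this
    linarith
  have hplus : ε / 2 ≤ |lam + s| := by
    have := abs_add_le (lam + s) (E - lam)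
    rw [show lam + s + (E - lam) = s + E by ring, abs_sub_comm] at this
    linarith
  rw [det_localBlock, show lam ^ 2 - p ^ 2 - 1 = (lam - s) * (lam + s) by linear_combination hs,
    abs_mul]
  have hsl : 0 ≤ s + |lam| := add_nonneg hs0 (abs_nonneg lam)
  rcases le_total 0 lam with hl | hl
  · rw [show |lam + s| = s + |lam| by rw [abs_of_nonneg hl, abs_of_nonneg (by linarith)]; ring]
    exact mul_le_mul_of_nonneg_right hminus hsl
  · rw [show |lam - s| = s + |lam| by rw [abs_of_nonpos hl, abs_of_nonpos (by linarith)]; ring]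
    exact (mul_comm _ _).trans_le (mul_le_mul_of_nonneg_left hplus hsl)

lemma abs_div_det_localBlock_le (hε : 0 < ε)
    (hdet : ε / 2 * (√(p ^ 2 + 1) + |lam|) ≤ |(localBlock p lam).det|) {w : ℝ}
    (hw : |w| ≤ √(p ^ 2 + 1) + |lam|) : |w / (lam ^ 2 - p ^ 2 - 1)| ≤ 2 / ε := by
  rw [det_localBlock] at hdet
  have hs : 1 ≤ √(p ^ 2 + 1) := Real.one_le_sqrt.mpr (by nlinarith)
  have hpos : 0 < |lam ^ 2 - p ^ 2 - 1| := lt_of_lt_of_le (by positivity) hdet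
  rw [abs_div, div_le_div_iff₀ hpos hε]
  nlinarith

lemma abs_inv_localBlock_apply_le (hε : 0 < ε)
    (hdet : ε / 2 * (√(p ^ 2 + 1) + |lam|) ≤ |(localBlock p lam).det|) (i j : Fin 2) :
    |(localBlock p lam)⁻¹ i j| ≤ 2 / ε := by
  have hp : |p| ≤ √(p ^ 2 + 1) := Real.abs_le_sqrt (by linarith)
  have hs : 1 ≤ √(p ^ 2 + 1) := Real.one_le_sqrt.mpr (by nlinarith)
  have hl := abs_nonneg lam
  rw [inv_localBlock]
  fin_cases i <;> fin_cases j <;>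
    simp only [Matrix.smul_apply, smul_eq_mul, ← div_eq_inv_mul] <;>
    refine abs_div_det_localBlock_le hε hdet ?_ <;> simp
  all_goals linarith [abs_sub (-p) lam, abs_neg p, abs_sub p lam]

lemma sum_sq_inv_localBlock_le (hε : 0 < ε)
    (hdet : ε / 2 * (√(p ^ 2 + 1) + |lam|) ≤ |(localBlock p lam).det|) :
    ∑ i, ∑ j, (localBlock p lam)⁻¹ i j ^ 2 ≤ (3 / ε) ^ 2 := by
  set s := √(p ^ 2 + 1)
  have hs : s ^ 2 = p ^ 2 + 1 := Real.sq_sqrt (by positivity)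
  have hsl : 0 ≤ s + |lam| := add_nonneg (Real.sqrt_nonneg _) (abs_nonneg lam)
  have hratio : ((s + |lam|) / (lam ^ 2 - p ^ 2 - 1)) ^ 2 ≤ (2 / ε) ^ 2 := by
    rw [← sq_abs]
    exact pow_le_pow_left₀ (abs_nonneg _)
      (abs_div_det_localBlock_le hε hdet (abs_of_nonneg hsl).le) 2
  calc ∑ i, ∑ j, (localBlock p lam)⁻¹ i j ^ 2
      = 2 * (s ^ 2 + lam ^ 2) * ((lam ^ 2 - p ^ 2 - 1)⁻¹) ^ 2 := by
        rw [inv_localBlock, hs]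
        simp [Fin.sum_univ_two, mul_pow]
        ring
    _ ≤ 2 * (s + |lam|) ^ 2 * ((lam ^ 2 - p ^ 2 - 1)⁻¹) ^ 2 := by
        gcongr
        nlinarith [sq_abs lam, abs_nonneg lam, Real.sqrt_nonneg (p ^ 2 + 1)]
    _ = 2 * ((s + |lam|) / (lam ^ 2 - p ^ 2 - 1)) ^ 2 := by ring
    _ ≤ 2 * (2 / ε) ^ 2 := by gcongr
    _ ≤ (3 / ε) ^ 2 := by
        rw [div_pow, div_pow, ← mul_div_assoc]
        gcongr
        norm_num

end LocalBlock

section Hamiltonian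

variable {d : ℕ}

def hopping (Λ' : Finset (Fin d → ℤ)) (γ : ℝ) :
    Matrix ({x // x ∈ Λ'} × Fin 2) ({x // x ∈ Λ'} × Fin 2) ℝ :=
  fun s t => if dist1 s.1.1 t.1.1 = 1 ∧ s.2 = t.2 then γ else 0

lemma sum_abs_hopping_le {Λ' : Finset (Fin d → ℤ)} {γ : ℝ} (hγ : 0 ≤ γ)
    (s : {x // x ∈ Λ'} × Fin 2) : ∑ t, |hopping Λ' γ s t| ≤ 2 * d * γ := by
  calc ∑ t, |hopping Λ' γ s t| = ∑ y ∈ Λ', if dist1 s.1.1 y = 1 then γ else 0 := by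
        rw [Fintype.sum_prod_type, ← sum_coe_sort Λ']
        refine Fintype.sum_congr _ _ fun y => ?_
        obtain ⟨x, i⟩ := s
        by_cases hy : dist1 x.1 y.1 = 1 <;> fin_cases i <;>
          simp [hopping, hy, abs_of_nonneg hγ, Fin.sum_univ_two]
    _ = #(Λ'.filter fun y => dist1 s.1.1 y = 1) * γ := by
        rw [sum_ite, sum_const_zero, sum_const, nsmul_eq_mul, add_zero]
    _ ≤ 2 * d * γ := by
        gcongr
        exact_mod_cast card_filter_dist1_eq_one_le _ _

lemma Ham_submatrix_sub_smul_one {γ lam : ℝ} {Λ Λ' : Finset (Fin d → ℤ)}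
    (u : {x // x ∈ Λ} → ℝ) (hsub : Λ' ⊆ Λ) :
    (Ham d γ Λ u).submatrix
          (fun s : {x // x ∈ Λ'} × Fin 2 => ((⟨s.1.1, hsub s.1.2⟩ : {x // x ∈ Λ}), s.2))
          (fun s : {x // x ∈ Λ'} × Fin 2 => ((⟨s.1.1, hsub s.1.2⟩ : {x // x ∈ Λ}), s.2))
          - lam • 1 =
      posBlockDiagonal (fun x => localBlock (u ⟨x.1, hsub x.2⟩) lam) + hopping Λ' γ := by
  ext ⟨x, i⟩ ⟨y, j⟩
  by_cases hxy : x = y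
  · subst hxy
    fin_cases i <;> fin_cases j <;> simp [Ham, hopping, localBlock, dist1_self]
  · have hxy' : x.1 ≠ y.1 := fun h => hxy (Subtype.ext h)
    simp [Ham, hopping, hxy, hxy', ite_and]

lemma dist1_le_one_of_posBlockDiagonal_mul_hopping_ne_zero {Λ' : Finset (Fin d → ℤ)}
    {a : {x // x ∈ Λ'} → Matrix (Fin 2) (Fin 2) ℝ} {γ : ℝ}
    {s t : {x // x ∈ Λ'} × Fin 2} (h : (posBlockDiagonal a * hopping Λ' γ) s t ≠ 0) :
    dist1 s.1.1 t.1.1 ≤ 1 := by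
  obtain ⟨x, i⟩ := s
  obtain ⟨y, j⟩ := t
  obtain ⟨⟨r, k⟩, ha, hG⟩ := exists_ne_zero_of_mul_apply_ne_zero h
  have hxr : x = r := by
    by_contra hne
    exact ha (by simp [hne])
  have hry : dist1 r.1 y.1 = 1 := by
    by_contra hne
    exact hG (by simp [hopping, hne])
  exact (hxr ▸ hry).le

lemma sum_abs_posBlockDiagonal_mul_hopping_le {Λ' : Finset (Fin d → ℤ)}
    {a : {x // x ∈ Λ'} → Matrix (Fin 2) (Fin 2) ℝ} {γ ε : ℝ} (hγ : 0 ≤ γ)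
    (ha : ∀ x i j, |a x i j| ≤ 2 / ε) (s : {x // x ∈ Λ'} × Fin 2) :
    ∑ t, |(posBlockDiagonal a * hopping Λ' γ) s t| ≤ 8 * d * γ / ε := by
  have hrow : ∀ s, ∑ r, |posBlockDiagonal a s r| ≤ 4 / ε := fun s => by
    calc ∑ r, |posBlockDiagonal a s r| ≤ ∑ _j : Fin 2, 2 / ε := by
          rw [sum_abs_posBlockDiagonal_apply]
          exact sum_le_sum fun j _ => ha s.1 s.2 j
      _ = 4 / ε := by norm_num [div_eq_mul_inv, ← mul_assoc]
  calc ∑ t, |(posBlockDiagonal a * hopping Λ' γ) s t| ≤ 4 / ε * (2 * d * γ) :=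
        sum_abs_mul_apply_le hrow (sum_abs_hopping_le hγ) (by positivity) s
    _ = 8 * d * γ / ε := by ring

lemma opNorm_blk_le_pow_of_ne {Λ' : Finset (Fin d → ℤ)}
    {n : {x // x ∈ Λ'} → Matrix (Fin 2) (Fin 2) ℝ}
    {K : Matrix ({x // x ∈ Λ'} × Fin 2) ({x // x ∈ Λ'} × Fin 2) ℝ} {γ ε ρ q : ℝ}
    (hK : K = posBlockDiagonal n - posBlockDiagonal n * hopping Λ' γ * K)
    (hT : ∀ s, ∑ t, |(posBlockDiagonal n * hopping Λ' γ) s t| ≤ ρ) (hρ : 0 ≤ ρ)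
    (hε : 0 < ε) (hB : ∀ s t, |K s t| ≤ 12 / (5 * ε)) (hq : 3 * ρ ≤ q)
    {x y : {x // x ∈ Λ'}} (hxy : x ≠ y) :
    opNorm (blk K x y) ≤ q ^ dist1 x.1 y.1 * (4 / ε) := by
  have hk : dist1 x.1 y.1 ≠ 0 := fun h => hxy (Subtype.ext (dist1_eq_zero_iff.mp h))
  have hdecay := abs_apply_le_pow_of_eq_sub_mul (fun s t => dist1 s.1.1 t.1.1)
    (fun s r t => dist1_triangle _ _ _) hK
    (fun ⟨x, i⟩ ⟨y, j⟩ h => by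
      have hxy : x ≠ y := by
        rintro rfl
        exact h (dist1_self _)
      simp [hxy])
    (fun s t h => dist1_le_one_of_posBlockDiagonal_mul_hopping_ne_zero h) hT hρ hB
  have h3ρ : 3 * ρ ^ dist1 x.1 y.1 ≤ q ^ dist1 x.1 y.1 := calc
    3 * ρ ^ dist1 x.1 y.1 ≤ 3 ^ dist1 x.1 y.1 * ρ ^ dist1 x.1 y.1 := by
        gcongr
        exact le_self_pow₀ (by norm_num) hk
    _ = (3 * ρ) ^ dist1 x.1 y.1 := (mul_pow _ _ _).symm
    _ ≤ q ^ dist1 x.1 y.1 := by gcongr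
  calc opNorm (blk K x y) ≤ 2 * (ρ ^ dist1 x.1 y.1 * (12 / (5 * ε))) :=
        opNorm_blk_le_of_abs_le _ _ _ (by positivity) fun i j => hdecay (x, i) (y, j)
    _ = 8 / 5 * (3 * ρ ^ dist1 x.1 y.1) * (1 / ε) := by ring
    _ ≤ 4 * q ^ dist1 x.1 y.1 * (1 / ε) := by
        gcongr
        linarith [(by positivity : (0 : ℝ) ≤ ρ ^ dist1 x.1 y.1)]
    _ = q ^ dist1 x.1 y.1 * (4 / ε) := by ring

theorem isUnit_posBlockDiagonal_add_hopping_and_opNorm_blk_inv_le {Λ' : Finset (Fin d → ℤ)}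
    {a : {x // x ∈ Λ'} → Matrix (Fin 2) (Fin 2) ℝ} {γ ε c : ℝ}
    (hγ : 0 ≤ γ) (hε : 0 < ε) (hc : 24 * d ≤ c) (hcγ : 2 * c * γ ≤ ε)
    (ha : ∀ x, IsUnit (a x).det) (hentry : ∀ x i j, |(a x)⁻¹ i j| ≤ 2 / ε)
    (hnorm : ∀ x, opNorm (a x)⁻¹ ≤ 3 / ε) :
    IsUnit (posBlockDiagonal a + hopping Λ' γ) ∧
      ∀ x y, opNorm (blk (posBlockDiagonal a + hopping Λ' γ)⁻¹ x y) ≤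
        (c * γ / ε) ^ dist1 x.1 y.1 * (4 / ε) := by
  set N := posBlockDiagonal fun x => (a x)⁻¹
  set T := N * hopping Λ' γ
  set ρ := 8 * d * γ / ε
  have hρ0 : 0 ≤ ρ := by positivity
  have hρ : ρ ≤ 1 / 6 := by
    rw [div_le_iff₀ hε]
    nlinarith
  have hrow : ∀ s, ∑ t, |T s t| ≤ ρ := sum_abs_posBlockDiagonal_mul_hopping_le hγ hentry
  have hNM := posBlockDiagonal_inv_mul_add ha (hopping Λ' γ)
  have hunit := isUnit_of_mul_eq_one_add hNM hrow (by linarith)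
  have hK := inv_eq_sub_mul_inv_of_mul_eq_one_add hNM hunit
  set K := (posBlockDiagonal a + hopping Λ' γ)⁻¹
  have hNentry : ∀ s t, |N s t| ≤ 2 / ε := fun ⟨x, i⟩ ⟨y, j⟩ => by
    by_cases h : x = y
    · simp [N, h, hentry]
    · simp [N, h]
      positivity
  have hB : ∀ s t, |K s t| ≤ 12 / (5 * ε) := fun s t =>
    (abs_apply_le_of_eq_sub_mul hK hNentry hrow (by linarith) s t).trans <| by
      rw [div_le_div_iff₀ (by linarith) (by positivity)]
      field_simp
      linarith
  refine ⟨hunit, fun x y => ?_⟩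
  rcases eq_or_ne x y with rfl | hxy
  · rw [dist1_self, pow_zero, one_mul]
    refine (opNorm_blk_self_le hK hrow hB x).trans ?_
    calc opNorm (a x)⁻¹ + 2 * (ρ * (12 / (5 * ε)))
        ≤ 3 / ε + 2 * (ρ * (12 / (5 * ε))) := by gcongr; exact hnorm x
      _ ≤ 4 / ε := by
          field_simp
          linarith
  · refine opNorm_blk_le_pow_of_ne hK hrow hρ0 hε hB ?_ hxy
    calc 3 * ρ = 24 * d * γ / ε := by ring
      _ ≤ c * γ / ε := by gcongr

end Hamiltonian

theorem inverse_block_decay_general (d : ℕ) :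
    ∃ c : ℝ, 0 < c ∧
      ∀ (γ E ε : ℝ), 0 < γ → 0 < ε → 2 * c * γ ≤ ε →
      ∀ (Λ : Finset (Fin d → ℤ)), (∃ a b, Λ = Finset.Icc a b) →
      ∀ (u : {x // x ∈ Λ} → ℝ), (∀ x, u x ∈ Set.Icc (-1 : ℝ) 1) →
      ∀ (Λ' : Finset (Fin d → ℤ)) (hsub : Λ' ⊆ Λ),
      (∀ x : {x // x ∈ Λ'},
          ε ≤ |Real.sqrt (u ⟨x.1, hsub x.2⟩ ^ 2 + 1) - E| ∧
          ε ≤ |Real.sqrt (u ⟨x.1, hsub x.2⟩ ^ 2 + 1) + E|) →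
      ∀ lam : ℝ, |lam - E| ≤ ε / 2 →
      IsUnit ((Ham d γ Λ u).submatrix
          (fun s : {x // x ∈ Λ'} × Fin 2 => ((⟨s.1.1, hsub s.1.2⟩ : {x // x ∈ Λ}), s.2))
          (fun s : {x // x ∈ Λ'} × Fin 2 => ((⟨s.1.1, hsub s.1.2⟩ : {x // x ∈ Λ}), s.2))
          - lam • 1) ∧
      ∀ x y : {x // x ∈ Λ'},
        opNorm (blk (((Ham d γ Λ u).submatrix
            (fun s : {x // x ∈ Λ'} × Fin 2 => ((⟨s.1.1, hsub s.1.2⟩ : {x // x ∈ Λ}), s.2))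
            (fun s : {x // x ∈ Λ'} × Fin 2 => ((⟨s.1.1, hsub s.1.2⟩ : {x // x ∈ Λ}), s.2))
            - lam • 1)⁻¹) x y) ≤
          (c * γ / ε) ^ dist1 (x : Fin d → ℤ) (y : Fin d → ℤ) * (4 / ε) := by
  refine ⟨24 * (d + 1), by positivity, ?_⟩
  intro γ E ε hγ hε hcε Λ _ u _ Λ' hsub hres lam hlam
  rw [Ham_submatrix_sub_smul_one]
  have hdet x := mul_le_abs_det_localBlock (hres x).1 (hres x).2 hlam
  refine isUnit_posBlockDiagonal_add_hopping_and_opNorm_blk_inv_le hγ.le hε (by linarith) hcε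
    (fun x => ?_) (fun x => abs_inv_localBlock_apply_le hε (hdet x))
    (fun x => opNorm_le_of_sum_sq_le _ (by positivity) (sum_sq_inv_localBlock_le hε (hdet x)))
  exact isUnit_iff_ne_zero.mpr (abs_pos.mp (lt_of_lt_of_le (by positivity) (hdet x)))

/-- there is `c_d > 0` such that if `2·c_d·γ ≤ ε` and all positions of
`Λ' ⊆ Λ` are `ε`-nonresonant with `E`, then for `|λ-E| ≤ ε/2` the restriction `D` of
`H(u)` to `Λ'` has `D - λ·I` invertible, with 2×2 blocks of the inverse bounded by
`(c_d·γ/ε)^{|x-y|}·(4/ε)`. -/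
theorem inverse_block_decay (d : ℕ) (hd : 1 ≤ d) :
    ∃ c : ℝ, 0 < c ∧
      ∀ (γ E ε : ℝ), 0 < γ → 0 < ε → 2 * c * γ ≤ ε →
      ∀ (Λ : Finset (Fin d → ℤ)), (∃ a b, Λ = Finset.Icc a b) →
      ∀ (u : {x // x ∈ Λ} → ℝ), (∀ x, u x ∈ Set.Icc (-1 : ℝ) 1) →
      ∀ (Λ' : Finset (Fin d → ℤ)) (hsub : Λ' ⊆ Λ),
      (∀ x : {x // x ∈ Λ'},
          ε ≤ |Real.sqrt (u ⟨x.1, hsub x.2⟩ ^ 2 + 1) - E| ∧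
          ε ≤ |Real.sqrt (u ⟨x.1, hsub x.2⟩ ^ 2 + 1) + E|) →
      ∀ lam : ℝ, |lam - E| ≤ ε / 2 →
      IsUnit ((Ham d γ Λ u).submatrix
          (fun s : {x // x ∈ Λ'} × Fin 2 => ((⟨s.1.1, hsub s.1.2⟩ : {x // x ∈ Λ}), s.2))
          (fun s : {x // x ∈ Λ'} × Fin 2 => ((⟨s.1.1, hsub s.1.2⟩ : {x // x ∈ Λ}), s.2))
          - lam • 1) ∧
      ∀ x y : {x // x ∈ Λ'},
        opNorm (blk (((Ham d γ Λ u).submatrix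
            (fun s : {x // x ∈ Λ'} × Fin 2 => ((⟨s.1.1, hsub s.1.2⟩ : {x // x ∈ Λ}), s.2))
            (fun s : {x // x ∈ Λ'} × Fin 2 => ((⟨s.1.1, hsub s.1.2⟩ : {x // x ∈ Λ}), s.2))
            - lam • 1)⁻¹) x y) ≤
          (c * γ / ε) ^ dist1 (x : Fin d → ℤ) (y : Fin d → ℤ) * (4 / ε) :=
  inverse_block_decay_general d
end
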